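/- For every k ≥ 1, the set A = ∪_{i=1}^{k} { (i−1)·2^k + 1, (i−1)·2^k + 1 + 2^{i−1}, (i−1)·2^k + 2^i } is an attractor of the 1D string rlin(E_k); hence γ(rlin(E_k)) ≤ 3k, while γ(E_k) ≥ 2^k (every 2D attractor of E_k has at least 2^k positions). -/

import Mathlib

/-!
Statement 17: For every `k ≥ 1`, the set
`A = ∪_{i=1}^{k} {(i−1)·2^k + 1, (i−1)·2^k + 1 + 2^{i−1}, (i−1)·2^k + 2^i}`
(1-based positions; 0-based: `∪_{i=0}^{k-1} {i·2^k, i·2^k + 2^i, i·2^k + 2^{i+1} − 1}`)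
is an attractor of the 1D string `rlin(E_k)` of length `k·2^k`; hence
`γ(rlin(E_k)) ≤ 3k`, while every 2D attractor of `E_k` has at least `2^k`
positions, i.e. `γ(E_k) ≥ 2^k`.  Here `E_k[i][j] = testBit j i` is the binary 2D
string with `k` rows and `2^k` columns whose `j`-th column is the `k`-bit binary
representation of `j`, and `rlin` is row-major linearization.
-/

/-- Row-major linearization of an `n`-column 2D string (0-based). -/
def rlin {α : Type*} (M : ℕ → ℕ → α) (n : ℕ) : ℕ → α :=
  fun t => M (t / n) (t % n)

/-- `Γ` is an attractor for the 1D string `S` of length `N` (0-based positions). -/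
def IsAttractor1D {α : Type*} (S : ℕ → α) (N : ℕ) (Γ : Finset ℕ) : Prop :=
  (∀ x ∈ Γ, x < N) ∧
  ∀ len p, 1 ≤ len → p + len ≤ N →
    ∃ p', p' + len ≤ N ∧ (∀ t, t < len → S (p' + t) = S (p + t)) ∧
      ∃ x ∈ Γ, p' ≤ x ∧ x < p' + len

/-- `γ(S)` for a 1D string `S` of length `N`. -/
noncomputable def gamma1D {α : Type*} (S : ℕ → α) (N : ℕ) : ℕ :=
  sInf {c | ∃ Γ : Finset ℕ, IsAttractor1D S N Γ ∧ Γ.card = c}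

/-- `Γ` is an attractor for the `m × n` 2D string `M`. -/
def IsAttractor {α : Type*} (M : ℕ → ℕ → α) (m n : ℕ) (Γ : Finset (ℕ × ℕ)) : Prop :=
  (∀ q ∈ Γ, q.1 < m ∧ q.2 < n) ∧
  ∀ k₁ k₂ i j, 1 ≤ k₁ → 1 ≤ k₂ → i + k₁ ≤ m → j + k₂ ≤ n →
    ∃ i' j', i' + k₁ ≤ m ∧ j' + k₂ ≤ n ∧
      (∀ a b, a < k₁ → b < k₂ → M (i' + a) (j' + b) = M (i + a) (j + b)) ∧
      ∃ q ∈ Γ, i' ≤ q.1 ∧ q.1 < i' + k₁ ∧ j' ≤ q.2 ∧ q.2 < j' + k₂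

/-- The 2D string `E_k` (independent of `k` as a total function):
`E i j` is the `i`-th binary digit of `j`. -/
def Emat : ℕ → ℕ → Bool := fun i j => Nat.testBit j i

/-- The attractor candidate of `rlin(E_k)` (0-based positions). -/
def attrSet (k : ℕ) : Finset ℕ :=
  (Finset.range k).biUnion
    (fun i => {i * 2 ^ k, i * 2 ^ k + 2 ^ i, i * 2 ^ k + 2 ^ (i + 1) - 1})

/-!
Row `i` of `E_k` is `(0^{2^i} 1^{2^i})^*`, periodic with period `2^(i+1)`. A factor of `rlin(E_k)`
that crosses a row boundary contains the first position of a row. A factor inside row `i` can be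
shifted into the first period of the row; there it contains column `0`, `2^i` or `2^(i+1) - 1`,
unless it is a run of zeros or of ones, and such a run also occurs at column `0` or `2^i`.

The columns of `E_k` are pairwise distinct, so a full column of `E_k` occurs only at its own place
and every 2D attractor meets every column.
-/

lemma rlin_mul_add {α : Type*} (M : ℕ → ℕ → α) {n c : ℕ} (r : ℕ) (hc : c < n) :
    rlin M n (r * n + c) = M r c := by
  have hn : 0 < n := by omega
  simp only [rlin, Nat.mul_comm r, Nat.mul_add_div hn, Nat.mul_add_mod, Nat.div_eq_of_lt hc,
    Nat.mod_eq_of_lt hc, Nat.add_zero]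

lemma gamma1D_le_card {α : Type*} {S : ℕ → α} {N : ℕ} {Γ : Finset ℕ}
    (h : IsAttractor1D S N Γ) : gamma1D S N ≤ Γ.card :=
  Nat.sInf_le ⟨Γ, h, rfl⟩

lemma IsAttractor.le_card_of_columns_injective {α : Type*} {M : ℕ → ℕ → α} {m n : ℕ}
    {Γ : Finset (ℕ × ℕ)} (hΓ : IsAttractor M m n Γ) (hm : 1 ≤ m)
    (hcol : ∀ j j', j < n → j' < n → (∀ i < m, M i j = M i j') → j = j') :
    n ≤ Γ.card := by
  have hcover : Finset.range n ⊆ Γ.image Prod.snd := by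
    intro j hj
    rw [Finset.mem_range] at hj
    obtain ⟨i', j', hi', hj', heq, q, hq, -, -, hjq, hqj⟩ :=
      hΓ.2 m 1 0 j hm le_rfl (by omega) (by omega)
    obtain rfl : i' = 0 := by omega
    have hj'j : j' = j := hcol j' j (by omega) hj fun i hi => by simpa using heq i 0 hi one_pos
    exact Finset.mem_image.2 ⟨q, hq, by omega⟩
  calc n = (Finset.range n).card := (Finset.card_range n).symm
    _ ≤ (Γ.image Prod.snd).card := Finset.card_le_card hcover
    _ ≤ Γ.card := Finset.card_image_le

lemma eq_of_Emat_column_eq {k j j' : ℕ} (hj : j < 2 ^ k) (hj' : j' < 2 ^ k)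
    (h : ∀ i < k, Emat i j = Emat i j') : j = j' := by
  refine Nat.eq_of_testBit_eq fun i => ?_
  rcases lt_or_ge i k with hi | hi
  · exact h i hi
  · have hki : 2 ^ k ≤ 2 ^ i := Nat.pow_le_pow_right two_pos hi
    rw [Nat.testBit_lt_two_pow (by omega), Nat.testBit_lt_two_pow (by omega)]

lemma testBit_mod_two_pow_succ_add (c t r : ℕ) :
    (c % 2 ^ (r + 1) + t).testBit r = (c + t).testBit r := by
  have hmod : ∀ x, (x % 2 ^ (r + 1)).testBit r = x.testBit r := by
    simp [Nat.testBit_mod_two_pow]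
  rw [← hmod (c % _ + t), ← hmod (c + t), Nat.mod_add_mod]

def rowAnchors (i : ℕ) : Finset ℕ := {0, 2 ^ i, 2 ^ (i + 1) - 1}

lemma lt_of_mem_rowAnchors {i y : ℕ} (hy : y ∈ rowAnchors i) : y < 2 ^ (i + 1) := by
  have : 2 ^ i < 2 ^ (i + 1) := Nat.pow_lt_pow_right one_lt_two i.lt_succ_self
  simp only [rowAnchors, Finset.mem_insert, Finset.mem_singleton] at hy
  omega

lemma exists_testBit_occurrence_of_lt {r w c len : ℕ} (hlen : 1 ≤ len) (hc : c < 2 ^ (r + 1))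
    (hcw : c + len ≤ w) :
    ∃ c', c' + len ≤ w ∧ (∀ t < len, (c' + t).testBit r = (c + t).testBit r) ∧
      ∃ y ∈ rowAnchors r, c' ≤ y ∧ y < c' + len := by
  by_cases hstart : c = 0
  · exact ⟨c, hcw, fun _ _ => rfl, 0, by simp [rowAnchors], by omega, by omega⟩
  by_cases hmid : c ≤ 2 ^ r ∧ 2 ^ r < c + len
  · exact ⟨c, hcw, fun _ _ => rfl, 2 ^ r, by simp [rowAnchors], hmid.1, hmid.2⟩
  by_cases hend : 2 ^ (r + 1) ≤ c + len
  · exact ⟨c, hcw, fun _ _ => rfl, 2 ^ (r + 1) - 1, by simp [rowAnchors], by omega, by omega⟩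
  rcases le_or_gt (c + len) (2 ^ r) with hzeros | hones
  · refine ⟨0, by omega, fun t ht => ?_, 0, by simp [rowAnchors], le_rfl, by omega⟩
    rw [Nat.testBit_lt_two_pow (by omega), Nat.testBit_lt_two_pow (by omega)]
  · refine ⟨2 ^ r, by omega, fun t ht => ?_, 2 ^ r, by simp [rowAnchors], le_rfl, by omega⟩
    rw [Nat.testBit_of_two_pow_le_and_two_pow_add_one_gt (by omega) (by omega),
      Nat.testBit_of_two_pow_le_and_two_pow_add_one_gt (by omega) (by omega)]

lemma exists_testBit_occurrence {r w c len : ℕ} (hlen : 1 ≤ len) (hcw : c + len ≤ w) :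
    ∃ c', c' + len ≤ w ∧ (∀ t < len, (c' + t).testBit r = (c + t).testBit r) ∧
      ∃ y ∈ rowAnchors r, c' ≤ y ∧ y < c' + len := by
  obtain ⟨c', hc'w, heq, hy⟩ := exists_testBit_occurrence_of_lt hlen
    (Nat.mod_lt c (Nat.two_pow_pos _)) ((Nat.add_le_add_right (Nat.mod_le c _) len).trans hcw)
  exact ⟨c', hc'w, fun t ht => (heq t ht).trans (testBit_mod_two_pow_succ_add c t r), hy⟩

lemma mem_attrSet {k x : ℕ} :
    x ∈ attrSet k ↔ ∃ i < k, ∃ y ∈ rowAnchors i, x = i * 2 ^ k + y := by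
  have : ∀ i, i * 2 ^ k + 2 ^ (i + 1) - 1 = i * 2 ^ k + (2 ^ (i + 1) - 1) := fun i =>
    Nat.add_sub_assoc Nat.one_le_two_pow _
  simp [attrSet, rowAnchors, this]

lemma lt_of_mem_attrSet {k x : ℕ} (hx : x ∈ attrSet k) : x < k * 2 ^ k := by
  obtain ⟨i, hi, y, hy, rfl⟩ := mem_attrSet.1 hx
  have hy : y < 2 ^ k := (lt_of_mem_rowAnchors hy).trans_le (Nat.pow_le_pow_right two_pos hi)
  calc i * 2 ^ k + y < (i + 1) * 2 ^ k := by rw [Nat.succ_mul]; omega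
    _ ≤ k * 2 ^ k := Nat.mul_le_mul_right _ hi

lemma card_attrSet_le (k : ℕ) : (attrSet k).card ≤ 3 * k :=
  calc (attrSet k).card ≤ (Finset.range k).card * 3 :=
        Finset.card_biUnion_le_card_mul _ _ _ fun _ _ => Finset.card_le_three
    _ = 3 * k := by rw [Finset.card_range, Nat.mul_comm]

lemma isAttractor1D_attrSet (k : ℕ) :
    IsAttractor1D (rlin Emat (2 ^ k)) (k * 2 ^ k) (attrSet k) := by
  refine ⟨fun x hx => lt_of_mem_attrSet hx, fun len p hlen hpN => ?_⟩
  obtain ⟨r, c, hc, rfl⟩ : ∃ r c, c < 2 ^ k ∧ p = r * 2 ^ k + c :=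
    ⟨p / 2 ^ k, p % 2 ^ k, Nat.mod_lt p (Nat.two_pow_pos k), by rw [Nat.mul_comm, Nat.div_add_mod]⟩
  have hrk : r < k := Nat.lt_of_mul_lt_mul_right (a := 2 ^ k) (by omega)
  have hrow : (r + 1) * 2 ^ k ≤ k * 2 ^ k := Nat.mul_le_mul_right _ hrk
  rw [Nat.succ_mul] at hrow
  rcases lt_or_ge (2 ^ k) (c + len) with hcross | hin
  · have hr1k : r + 1 < k :=
      Nat.lt_of_mul_lt_mul_right (a := 2 ^ k) (by rw [Nat.succ_mul]; omega)
    refine ⟨r * 2 ^ k + c, hpN, fun _ _ => rfl, (r + 1) * 2 ^ k, ?_, ?_⟩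
    · exact mem_attrSet.2 ⟨r + 1, hr1k, 0, by simp [rowAnchors], rfl⟩
    · rw [Nat.succ_mul]; omega
  · obtain ⟨c', hc'w, heq, y, hy, hc'y, hyc'⟩ := exists_testBit_occurrence (r := r) hlen hin
    refine ⟨r * 2 ^ k + c', by omega, fun t ht => ?_,
      r * 2 ^ k + y, mem_attrSet.2 ⟨r, hrk, y, hy, rfl⟩, by omega, by omega⟩
    rw [Nat.add_assoc, Nat.add_assoc, rlin_mul_add _ _ (by omega), rlin_mul_add _ _ (by omega)]
    exact heq t ht

theorem statement17 (k : ℕ) (hk : 1 ≤ k) :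
    IsAttractor1D (rlin Emat (2 ^ k)) (k * 2 ^ k) (attrSet k) ∧
    (attrSet k).card ≤ 3 * k ∧
    gamma1D (rlin Emat (2 ^ k)) (k * 2 ^ k) ≤ 3 * k ∧
    (∀ Γ : Finset (ℕ × ℕ), IsAttractor Emat k (2 ^ k) Γ → 2 ^ k ≤ Γ.card) :=
  ⟨isAttractor1D_attrSet k, card_attrSet_le k,
    (gamma1D_le_card (isAttractor1D_attrSet k)).trans (card_attrSet_le k),
    fun _ hΓ => hΓ.le_card_of_columns_injective hk fun _ _ hj hj' => eq_of_Emat_column_eq hj hj'⟩
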